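/- (Bargmann–Fock / Wick quantization formula.) Let C, ψ : ℂ → ℂ be entire functions, n ∈ ℕ, and define on ℝ³ (coordinates (x,y,θ), z = x+iy) the observable F(x,y,θ) = C(z)·(z̄/(2i))ⁿ and the polarized wave function Ψ(x,y,θ) = ψ(z)·e^{−|z|²/(4ħ)}·e^{iθ}. Then the Wick quantum product F •ν Ψ := Σ_{k≥0} (2ħ)^k (1/k!) (∂_z̄^k F)·((∂_z^#)^k Ψ) (a finite sum, all terms with k > n vanishing) equals (ħ/i)ⁿ · C(z) · ψ^{(n)}(z) · e^{−|z|²/(4ħ)} · e^{iθ}, where ψ^{(n)} is the n-th complex derivative of ψ. -/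

import Mathlib

open Complex

/-- Partial derivative in the first coordinate `x`. -/
noncomputable def dX (f : ℝ × ℝ × ℝ → ℂ) : ℝ × ℝ × ℝ → ℂ :=
  fun v => deriv (fun s => f (s, v.2.1, v.2.2)) v.1

/-- Partial derivative in the second coordinate `y`. -/
noncomputable def dY (f : ℝ × ℝ × ℝ → ℂ) : ℝ × ℝ × ℝ → ℂ :=
  fun v => deriv (fun s => f (v.1, s, v.2.2)) v.2.1

/-- Partial derivative in the fiber coordinate `θ` (third coordinate). -/
noncomputable def dT (f : ℝ × ℝ × ℝ → ℂ) : ℝ × ℝ × ℝ → ℂ :=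
  fun v => deriv (fun s => f (v.1, v.2.1, s)) v.2.2

/-- The Wirtinger operator `∂_z = (1/2)(∂_x − i∂_y)`. -/
noncomputable def dZ (f : ℝ × ℝ × ℝ → ℂ) : ℝ × ℝ × ℝ → ℂ :=
  fun v => (1 / 2 : ℂ) * (dX f v - Complex.I * dY f v)

/-- The Wirtinger operator `∂_z̄ = (1/2)(∂_x + i∂_y)`. -/
noncomputable def dZbar (f : ℝ × ℝ × ℝ → ℂ) : ℝ × ℝ × ℝ → ℂ :=
  fun v => (1 / 2 : ℂ) * (dX f v + Complex.I * dY f v)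

/-- The horizontal lift `∂_z^# = ∂_z − (z̄/(4iħ))∂_θ` with respect to the connection form
`α = (1/(4iħ))(z̄ dz − z dz̄) + dθ`. -/
noncomputable def BZ (hb : ℝ) (f : ℝ × ℝ × ℝ → ℂ) : ℝ × ℝ × ℝ → ℂ :=
  fun v => dZ f v -
    (starRingEnd ℂ) ((v.1 : ℂ) + Complex.I * (v.2.1 : ℂ)) / (4 * Complex.I * (hb : ℂ)) *
      dT f v

/-!
Write `Ψ = ψ(z) · vacuum` with `vacuum = e^{−|z|²/(4ħ)} e^{iθ}`. Since `∂_z^# vacuum = −(z̄/(2ħ)) vacuum`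
and `∂_θ` kills functions of `(z, z̄)`, the horizontal lift acts on `G(z, z̄) · vacuum` as `∂_z − z̄/(2ħ)`
on `G`, so `(∂_z^#)^k Ψ = ((∂ − z̄/(2ħ))^k ψ)(z) · vacuum`; likewise `∂_z̄^k F = C(z) P^{(k)}(z̄)` with
`P(w) = (w/(2i))ⁿ`. The quantum product is then the Taylor expansion of `P` at `z̄` evaluated at the
operator `2ħ(∂ − z̄/(2ħ))`, i.e. `P(2ħ∂) ψ = (ħ/i)ⁿ ψ⁽ⁿ⁾`. Because everything is a polynomial in `∂`
with scalar coefficients, this is the binomial theorem in `ℂ[X]`, transported to `ψ` by the linear map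
`p ↦ (p(∂)ψ)(z)`.
-/

def complexCoord (v : ℝ × ℝ × ℝ) : ℂ := (v.1 : ℂ) + I * (v.2.1 : ℂ)

/-- `∂_z G = a`, `∂_z̄ G = b` and `∂_θ G = t` at `v`, expressed through the real partial derivatives
`∂_x = ∂_z + ∂_z̄` and `∂_y = i(∂_z − ∂_z̄)`. -/
structure HasWirtingerDerivAt (G : ℝ × ℝ × ℝ → ℂ) (a b t : ℂ) (v : ℝ × ℝ × ℝ) : Prop where
  hasDerivAt_x : HasDerivAt (fun s => G (s, v.2.1, v.2.2)) (a + b) v.1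
  hasDerivAt_y : HasDerivAt (fun s => G (v.1, s, v.2.2)) (I * (a - b)) v.2.1
  hasDerivAt_θ : HasDerivAt (fun s => G (v.1, v.2.1, s)) t v.2.2

namespace HasWirtingerDerivAt

variable {G H : ℝ × ℝ × ℝ → ℂ} {a b t a' b' t' : ℂ} {v : ℝ × ℝ × ℝ}

theorem dZ_eq (h : HasWirtingerDerivAt G a b t v) : dZ G v = a := by
  simp only [dZ, dX, dY, h.hasDerivAt_x.deriv, h.hasDerivAt_y.deriv]
  linear_combination (-(a - b) / 2) * I_mul_I

theorem dZbar_eq (h : HasWirtingerDerivAt G a b t v) : dZbar G v = b := by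
  simp only [dZbar, dX, dY, h.hasDerivAt_x.deriv, h.hasDerivAt_y.deriv]
  linear_combination ((a - b) / 2) * I_mul_I

theorem BZ_eq (hb : ℝ) (h : HasWirtingerDerivAt G a b t v) :
    BZ hb G v = a - (starRingEnd ℂ) (complexCoord v) / (4 * I * hb) * t := by
  rw [BZ, h.dZ_eq, dT, h.hasDerivAt_θ.deriv, complexCoord]

theorem congr_deriv (h : HasWirtingerDerivAt G a b t v) (ha : a = a') (hb : b = b')
    (ht : t = t') : HasWirtingerDerivAt G a' b' t' v := by
  subst ha hb ht
  exact h

theorem fun_add (hG : HasWirtingerDerivAt G a b t v) (hH : HasWirtingerDerivAt H a' b' t' v) :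
    HasWirtingerDerivAt (fun v => G v + H v) (a + a') (b + b') (t + t') v where
  hasDerivAt_x := (hG.hasDerivAt_x.add hH.hasDerivAt_x).congr_deriv (by ring)
  hasDerivAt_y := (hG.hasDerivAt_y.add hH.hasDerivAt_y).congr_deriv (by ring)
  hasDerivAt_θ := hG.hasDerivAt_θ.add hH.hasDerivAt_θ

theorem fun_mul (hG : HasWirtingerDerivAt G a b t v) (hH : HasWirtingerDerivAt H a' b' t' v) :
    HasWirtingerDerivAt (fun v => G v * H v) (a * H v + G v * a') (b * H v + G v * b')
      (t * H v + G v * t') v where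
  hasDerivAt_x := (hG.hasDerivAt_x.mul hH.hasDerivAt_x).congr_deriv (by ring)
  hasDerivAt_y := (hG.hasDerivAt_y.mul hH.hasDerivAt_y).congr_deriv (by ring)
  hasDerivAt_θ := hG.hasDerivAt_θ.mul hH.hasDerivAt_θ

theorem fun_sum {ι : Type*} (s : Finset ι) {G : ι → ℝ × ℝ × ℝ → ℂ} {a b t : ι → ℂ}
    (h : ∀ i ∈ s, HasWirtingerDerivAt (G i) (a i) (b i) (t i) v) :
    HasWirtingerDerivAt (fun v => ∑ i ∈ s, G i v) (∑ i ∈ s, a i) (∑ i ∈ s, b i)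
      (∑ i ∈ s, t i) v where
  hasDerivAt_x := by
    rw [← Finset.sum_add_distrib]
    exact HasDerivAt.fun_sum fun i hi => (h i hi).hasDerivAt_x
  hasDerivAt_y := by
    rw [← Finset.sum_sub_distrib, Finset.mul_sum]
    exact HasDerivAt.fun_sum fun i hi => (h i hi).hasDerivAt_y
  hasDerivAt_θ := HasDerivAt.fun_sum fun i hi => (h i hi).hasDerivAt_θ

theorem comp {f : ℂ → ℂ} {f' : ℂ} (hf : HasDerivAt f f' (G v))
    (hG : HasWirtingerDerivAt G a b t v) :
    HasWirtingerDerivAt (fun v => f (G v)) (f' * a) (f' * b) (f' * t) v where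
  hasDerivAt_x := (hf.comp v.1 hG.hasDerivAt_x).congr_deriv (by ring)
  hasDerivAt_y := (hf.comp v.2.1 hG.hasDerivAt_y).congr_deriv (by ring)
  hasDerivAt_θ := hf.comp v.2.2 hG.hasDerivAt_θ

end HasWirtingerDerivAt

theorem hasWirtingerDerivAt_complexCoord (v : ℝ × ℝ × ℝ) :
    HasWirtingerDerivAt complexCoord 1 0 0 v where
  hasDerivAt_x := by
    simpa [complexCoord] using ((hasDerivAt_id v.1).ofReal_comp).add_const (I * v.2.1)
  hasDerivAt_y := by
    simpa [complexCoord] using ((hasDerivAt_id v.2.1).ofReal_comp.const_mul I).const_add (v.1 : ℂ)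
  hasDerivAt_θ := hasDerivAt_const _ (complexCoord v)

theorem hasWirtingerDerivAt_conj_complexCoord (v : ℝ × ℝ × ℝ) :
    HasWirtingerDerivAt (fun v => (starRingEnd ℂ) (complexCoord v)) 0 1 0 v where
  hasDerivAt_x := by
    simpa [complexCoord] using ((hasDerivAt_id v.1).ofReal_comp).sub_const (I * v.2.1)
  hasDerivAt_y := by
    show HasDerivAt (fun s : ℝ => (starRingEnd ℂ) ((v.1 : ℂ) + I * s)) (I * (0 - 1)) v.2.1
    simp only [map_add, map_mul, conj_ofReal, conj_I]
    simpa using (((hasDerivAt_id v.2.1).ofReal_comp.const_mul I).neg).const_add (v.1 : ℂ)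
  hasDerivAt_θ := hasDerivAt_const _ ((starRingEnd ℂ) (complexCoord v))

theorem hasWirtingerDerivAt_fiberCoord (v : ℝ × ℝ × ℝ) :
    HasWirtingerDerivAt (fun v => (v.2.2 : ℂ)) 0 0 1 v where
  hasDerivAt_x := by simpa using hasDerivAt_const v.1 (v.2.2 : ℂ)
  hasDerivAt_y := by simpa using hasDerivAt_const v.2.1 (v.2.2 : ℂ)
  hasDerivAt_θ := (hasDerivAt_id v.2.2).ofReal_comp

theorem hasWirtingerDerivAt_comp_complexCoord {f : ℂ → ℂ} (hf : Differentiable ℂ f)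
    (v : ℝ × ℝ × ℝ) :
    HasWirtingerDerivAt (fun v => f (complexCoord v)) (deriv f (complexCoord v)) 0 0 v :=
  ((hasWirtingerDerivAt_complexCoord v).comp (hf _).hasDerivAt).congr_deriv
    (mul_one _) (mul_zero _) (mul_zero _)

theorem hasWirtingerDerivAt_comp_conj_complexCoord {g : ℂ → ℂ} (hg : Differentiable ℂ g)
    (v : ℝ × ℝ × ℝ) :
    HasWirtingerDerivAt (fun v => g ((starRingEnd ℂ) (complexCoord v))) 0
      (deriv g ((starRingEnd ℂ) (complexCoord v))) 0 v :=
  ((hasWirtingerDerivAt_conj_complexCoord v).comp (hg _).hasDerivAt).congr_deriv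
    (mul_zero _) (mul_one _) (mul_zero _)

theorem hasWirtingerDerivAt_mul_conj {f g : ℂ → ℂ} (hf : Differentiable ℂ f)
    (hg : Differentiable ℂ g) (v : ℝ × ℝ × ℝ) :
    HasWirtingerDerivAt (fun v => f (complexCoord v) * g ((starRingEnd ℂ) (complexCoord v)))
      (deriv f (complexCoord v) * g ((starRingEnd ℂ) (complexCoord v)))
      (f (complexCoord v) * deriv g ((starRingEnd ℂ) (complexCoord v))) 0 v :=
  ((hasWirtingerDerivAt_comp_complexCoord hf v).fun_mul
    (hasWirtingerDerivAt_comp_conj_complexCoord hg v)).congr_deriv (by ring) (by ring) (by ring)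

theorem differentiable_iterate_deriv {f : ℂ → ℂ} (hf : Differentiable ℂ f) (k : ℕ) :
    Differentiable ℂ (deriv^[k] f) := by
  induction k with
  | zero => exact hf
  | succ k ih => rw [Function.iterate_succ_apply']; exact ih.deriv

theorem iterate_dZbar_mul_conj {f g : ℂ → ℂ} (hf : Differentiable ℂ f) (hg : Differentiable ℂ g)
    (k : ℕ) :
    dZbar^[k] (fun v => f (complexCoord v) * g ((starRingEnd ℂ) (complexCoord v))) =
      fun v => f (complexCoord v) * deriv^[k] g ((starRingEnd ℂ) (complexCoord v)) := by
  induction k with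
  | zero => rfl
  | succ k ih =>
    funext v
    rw [Function.iterate_succ_apply', ih, Function.iterate_succ_apply',
      (hasWirtingerDerivAt_mul_conj hf (differentiable_iterate_deriv hg k) v).dZbar_eq]

theorem iterate_deriv_div_pow (c w : ℂ) (n k : ℕ) :
    deriv^[k] (fun w => (w / c) ^ n) w = n.descFactorial k * w ^ (n - k) / c ^ n := by
  simp_rw [div_pow]
  rw [← iteratedDeriv_eq_iterate, iteratedDeriv_div_const, iteratedDeriv_pow]

noncomputable def vacuum (hb : ℝ) (v : ℝ × ℝ × ℝ) : ℂ :=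
  exp (-(((v.1 ^ 2 + v.2.1 ^ 2) / (4 * hb) : ℝ) : ℂ)) * exp (I * v.2.2)

theorem vacuum_eq_exp (hb : ℝ) :
    vacuum hb = fun v =>
      exp (-(complexCoord v * (starRingEnd ℂ) (complexCoord v)) / (4 * hb) + I * v.2.2) := by
  funext v
  rw [vacuum, ← exp_add, complexCoord]
  congr 2
  simp only [map_add, map_mul, conj_ofReal, conj_I]
  push_cast
  linear_combination (-(v.2.1 : ℂ) ^ 2 / (4 * hb)) * I_mul_I

theorem hasWirtingerDerivAt_vacuum (hb : ℝ) (v : ℝ × ℝ × ℝ) :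
    HasWirtingerDerivAt (vacuum hb)
      (-(starRingEnd ℂ) (complexCoord v) / (4 * hb) * vacuum hb v)
      (-complexCoord v / (4 * hb) * vacuum hb v) (I * vacuum hb v) v := by
  have hexponent := (((hasWirtingerDerivAt_complexCoord v).fun_mul
    (hasWirtingerDerivAt_conj_complexCoord v)).comp
    ((hasDerivAt_id _).neg.div_const (4 * hb : ℂ))).fun_add
    ((hasWirtingerDerivAt_fiberCoord v).comp ((hasDerivAt_id _).const_mul I))
  rw [vacuum_eq_exp]
  refine (hexponent.comp (hasDerivAt_exp _)).congr_deriv ?_ ?_ ?_ <;>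
    simp only [Pi.neg_apply, id_eq] <;> ring

theorem BZ_mul_vacuum (hb : ℝ) {G : ℝ × ℝ × ℝ → ℂ} {a b : ℂ} {v : ℝ × ℝ × ℝ}
    (hG : HasWirtingerDerivAt G a b 0 v) :
    BZ hb (fun v => G v * vacuum hb v) v =
      (a - (starRingEnd ℂ) (complexCoord v) / (2 * hb) * G v) * vacuum hb v := by
  rw [(hG.fun_mul (hasWirtingerDerivAt_vacuum hb v)).BZ_eq]
  field_simp
  ring

noncomputable def jet (f : ℂ → ℂ) (z : ℂ) (i : ℕ) : ℂ := deriv^[i] f z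

theorem jet_deriv (f : ℂ → ℂ) (z : ℂ) : jet (deriv f) z = fun i => jet f z (i + 1) := by
  funext i
  rw [jet, jet, Function.iterate_succ_apply]

section Jet

open Polynomial

/-- `evalJet (jet f z) p = (p(∂) f)(z)`. -/
noncomputable def evalJet (d : ℕ → ℂ) : ℂ[X] →ₗ[ℂ] ℂ :=
  lsum fun i => LinearMap.mulRight ℂ (d i)

theorem evalJet_monomial (d : ℕ → ℂ) (i : ℕ) (c : ℂ) : evalJet d (monomial i c) = c * d i := by
  simp [evalJet]

theorem evalJet_X_pow (d : ℕ → ℂ) (i : ℕ) : evalJet d (X ^ i) = d i := by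
  rw [← monomial_one_right_eq_X_pow, evalJet_monomial, one_mul]

theorem evalJet_C_mul (d : ℕ → ℂ) (c : ℂ) (p : ℂ[X]) :
    evalJet d (C c * p) = c * evalJet d p := by
  rw [← smul_eq_C_mul, map_smul, smul_eq_mul]

theorem evalJet_X_mul (d : ℕ → ℂ) (p : ℂ[X]) :
    evalJet d (X * p) = evalJet (fun i => d (i + 1)) p := by
  induction p using Polynomial.induction_on' with
  | add p q hp hq => rw [mul_add, map_add, map_add, hp, hq]
  | monomial i c => rw [X_mul_monomial, evalJet_monomial, evalJet_monomial]

theorem evalJet_X_sub_C_pow (d : ℕ → ℂ) (β : ℂ) (k : ℕ) :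
    evalJet d ((X - C β) ^ k) =
      ∑ i ∈ Finset.range (k + 1), d i * ((-β) ^ (k - i) * k.choose i) := by
  rw [sub_eq_add_neg, ← C_neg, add_pow, map_sum]
  refine Finset.sum_congr rfl fun i _ => ?_
  rw [← C_pow, mul_assoc, ← C_eq_natCast, ← C_mul, X_pow_mul_C, evalJet_C_mul, evalJet_X_pow,
    mul_comm]

theorem sum_choose_mul_evalJet (d : ℕ → ℂ) {c : ℂ} (hc : c ≠ 0) (w : ℂ) (n : ℕ) :
    ∑ k ∈ Finset.range (n + 1), w ^ (n - k) * c ^ k * n.choose k * evalJet d ((X - C (w / c)) ^ k)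
      = c ^ n * d n := by
  have binomial : (C c * X) ^ n = ∑ k ∈ Finset.range (n + 1),
      C (w ^ (n - k) * c ^ k * n.choose k) * (X - C (w / c)) ^ k := by
    have : C c * X = C c * (X - C (w / c)) + C w := by
      rw [mul_sub, ← C_mul, mul_div_cancel₀ _ hc, sub_add_cancel]
    rw [this, add_pow]
    refine Finset.sum_congr rfl fun k _ => ?_
    simp only [mul_pow, ← C_pow, map_mul, map_natCast]
    ring
  calc _ = evalJet d ((C c * X) ^ n) := by simp only [binomial, map_sum, evalJet_C_mul]
    _ = c ^ n * d n := by rw [mul_pow, ← C_pow, evalJet_C_mul, evalJet_X_pow]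

theorem sum_iterate_deriv_div_pow_mul_evalJet (d : ℕ → ℂ) {c : ℂ} (hc : c ≠ 0) (a w : ℂ)
    (n : ℕ) :
    ∑ k ∈ Finset.range (n + 1), c ^ k / k.factorial * deriv^[k] (fun w => (w / a) ^ n) w *
      evalJet d ((X - C (w / c)) ^ k) = (c / a) ^ n * d n := by
  rw [div_pow, div_mul_eq_mul_div, ← sum_choose_mul_evalJet d hc w n, Finset.sum_div]
  refine Finset.sum_congr rfl fun k _ => ?_
  have : (k.factorial : ℂ) ≠ 0 := Nat.cast_ne_zero.mpr k.factorial_ne_zero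
  rw [iterate_deriv_div_pow, Nat.descFactorial_eq_factorial_mul_choose]
  push_cast
  field_simp

theorem hasWirtingerDerivAt_evalJet {ψ β : ℂ → ℂ} (hψ : Differentiable ℂ ψ)
    (hβ : Differentiable ℂ β) (k : ℕ) (v : ℝ × ℝ × ℝ) :
    ∃ b, HasWirtingerDerivAt
      (fun v => evalJet (jet ψ (complexCoord v))
        ((X - C (β ((starRingEnd ℂ) (complexCoord v)))) ^ k))
      (evalJet (jet (deriv ψ) (complexCoord v))
        ((X - C (β ((starRingEnd ℂ) (complexCoord v)))) ^ k)) b 0 v := by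
  simp only [evalJet_X_sub_C_pow]
  refine ⟨_, (HasWirtingerDerivAt.fun_sum _ fun i _ => hasWirtingerDerivAt_mul_conj
    (f := deriv^[i] ψ) (g := fun w => (-β w) ^ (k - i) * k.choose i)
    (differentiable_iterate_deriv hψ i) (by fun_prop) v).congr_deriv ?_ rfl (by simp)⟩
  refine Finset.sum_congr rfl fun i _ => ?_
  rw [jet, ← Function.iterate_succ_apply, Function.iterate_succ_apply']

theorem iterate_BZ_mul_vacuum (hb : ℝ) {ψ : ℂ → ℂ} (hψ : Differentiable ℂ ψ) (k : ℕ) :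
    (BZ hb)^[k] (fun v => ψ (complexCoord v) * vacuum hb v) = fun v =>
      evalJet (jet ψ (complexCoord v))
        ((X - C ((starRingEnd ℂ) (complexCoord v) / (2 * hb))) ^ k) * vacuum hb v := by
  induction k with
  | zero =>
    funext v
    rw [Function.iterate_zero_apply, pow_zero, ← pow_zero (X : ℂ[X]), evalJet_X_pow]
    rfl
  | succ k ih =>
    funext v
    obtain ⟨b, hH⟩ := hasWirtingerDerivAt_evalJet hψ (β := (· / (2 * hb))) (by fun_prop) k v
    rw [Function.iterate_succ_apply', ih, BZ_mul_vacuum hb hH, jet_deriv, ← evalJet_X_mul,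
      ← evalJet_C_mul, ← map_sub, ← sub_mul, pow_succ']

end Jet

/-- Bargmann–Fock / Wick quantization formula: for the observable `F = C(z)(z̄/(2i))ⁿ` and the
polarized wave function `Ψ = ψ(z) e^{−|z|²/(4ħ)} e^{iθ}`, the Wick quantum product
`F •ν Ψ = Σ_k (2ħ)^k (1/k!) (∂_z̄^k F)((∂_z^#)^k Ψ)` equals
`(ħ/i)ⁿ C(z) ψ⁽ⁿ⁾(z) e^{−|z|²/(4ħ)} e^{iθ}`. -/
theorem bargmann_fock_quantization (hb : ℝ) (hhbar : 0 < hb)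
    (C ψ : ℂ → ℂ) (hC : Differentiable ℂ C) (hψ : Differentiable ℂ ψ) (n : ℕ)
    (F Ψ : ℝ × ℝ × ℝ → ℂ)
    (hF : F = fun v => C ((v.1 : ℂ) + Complex.I * (v.2.1 : ℂ)) *
      ((starRingEnd ℂ) ((v.1 : ℂ) + Complex.I * (v.2.1 : ℂ)) / (2 * Complex.I)) ^ n)
    (hΨ : Ψ = fun v => ψ ((v.1 : ℂ) + Complex.I * (v.2.1 : ℂ)) *
      Complex.exp (-(((v.1 ^ 2 + v.2.1 ^ 2) / (4 * hb) : ℝ) : ℂ)) *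
      Complex.exp (Complex.I * (v.2.2 : ℂ))) :
    ∀ v : ℝ × ℝ × ℝ,
      (∑' k : ℕ, (2 * (hb : ℂ)) ^ k / (Nat.factorial k : ℂ) *
          (dZbar^[k] F v * (BZ hb)^[k] Ψ v)) =
      ((hb : ℂ) / Complex.I) ^ n * C ((v.1 : ℂ) + Complex.I * (v.2.1 : ℂ)) *
        deriv^[n] ψ ((v.1 : ℂ) + Complex.I * (v.2.1 : ℂ)) *
        Complex.exp (-(((v.1 ^ 2 + v.2.1 ^ 2) / (4 * hb) : ℝ) : ℂ)) *
        Complex.exp (Complex.I * (v.2.2 : ℂ)) := by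
  intro v
  have hP : Differentiable ℂ fun w : ℂ => (w / (2 * I)) ^ n := by fun_prop
  have h2hb : (2 * hb : ℂ) ≠ 0 := by exact_mod_cast (by positivity : 2 * hb ≠ 0)
  have hF' : F = fun v => C (complexCoord v) *
      (fun w => (w / (2 * I)) ^ n) ((starRingEnd ℂ) (complexCoord v)) := hF
  have hΨ' : Ψ = fun v => ψ (complexCoord v) * vacuum hb v := by
    rw [hΨ]; funext v; rw [vacuum, mul_assoc]; rfl
  simp only [hF', hΨ', iterate_dZbar_mul_conj hC hP, iterate_BZ_mul_vacuum hb hψ]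
  rw [tsum_eq_sum (s := Finset.range (n + 1)) fun k hk => by
    rw [iterate_deriv_div_pow, Nat.descFactorial_eq_zero_iff_lt.mpr (by simpa using hk)]
    simp]
  calc _ = (∑ k ∈ Finset.range (n + 1), (2 * (hb : ℂ)) ^ k / k.factorial *
        deriv^[k] (fun w => (w / (2 * I)) ^ n) ((starRingEnd ℂ) (complexCoord v)) *
        evalJet (jet ψ (complexCoord v))
          ((Polynomial.X - Polynomial.C ((starRingEnd ℂ) (complexCoord v) / (2 * hb))) ^ k)) *
        (C (complexCoord v) * vacuum hb v) := by
        rw [Finset.sum_mul]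
        exact Finset.sum_congr rfl fun k _ => by ring
    _ = _ := by
      rw [sum_iterate_deriv_div_pow_mul_evalJet _ h2hb, mul_div_mul_left _ _ two_ne_zero]
      simp only [jet, vacuum, complexCoord]
      ring
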